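/- Let (E,d) be a complete separable metric space and μ a Borel probability measure on E satisfying the transportation cost inequality T₁(C). Then for every Borel set A with μ(A) > 0 and every r ≥ √(2C·log(1/μ(A))), the set A_r^c = { x ∈ E : d(x,A) ≥ r } satisfies μ(A_r^c) ≤ exp( −(1/(2C))·( r − √(2C·log(1/μ(A))) )² ). -/

import Mathlib

open MeasureTheory ENNReal
open scoped Classical

noncomputable section

/-- `π` is a coupling of the probability measures `μ` and `ν`:
its marginal distributions are `μ` and `ν`. -/
def IsCoupling {E : Type*} [MeasurableSpace E] (π : Measure (E × E)) (μ ν : Measure E) : Prop :=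
  π.map Prod.fst = μ ∧ π.map Prod.snd = ν

/-- The `p`-th power of the `L^p` Wasserstein distance, `W_p^p(μ,ν)`, as the infimum of the
transportation cost over all couplings. -/
def Wcost {E : Type*} [MetricSpace E] [MeasurableSpace E] (p : ℝ) (μ ν : Measure E) : ℝ≥0∞ :=
  ⨅ (π : Measure (E × E)) (_ : IsProbabilityMeasure π) (_ : IsCoupling π μ ν),
    ∫⁻ z, ENNReal.ofReal (dist z.1 z.2 ^ p) ∂π

/-- Relative entropy (Kullback-Leibler information) `H(ν,μ)`:
`∫ log (dν/dμ) dν` if `ν ≪ μ` (and the integral exists), `+∞` otherwise. -/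
def relEnt {Ω : Type*} [MeasurableSpace Ω] (ν μ : Measure Ω) : ℝ≥0∞ :=
  if ν ≪ μ ∧ Integrable (fun x => Real.log ((ν.rnDeriv μ) x).toReal) ν
  then ENNReal.ofReal (∫ x, Real.log ((ν.rnDeriv μ) x).toReal ∂ν)
  else ∞

/-- The transportation cost inequality `T_p(C)`: `W_p(μ,ν) ≤ √(2 C H(ν,μ))` for every
probability measure `ν`. -/
def TCI {E : Type*} [MetricSpace E] [MeasurableSpace E] (p : ℝ) (C : ℝ) (μ : Measure E) : Prop :=
  ∀ ν : Measure E, IsProbabilityMeasure ν →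
    Wcost p μ ν ^ (1 / p) ≤ (ENNReal.ofReal (2 * C) * relEnt ν μ) ^ (1 / 2 : ℝ)

/-- The measure `ν = h·μ`. -/
def densMeas {Ω : Type*} [MeasurableSpace Ω] (μ : Measure Ω) (h : Ω → ℝ) : Measure Ω :=
  μ.withDensity fun x => ENNReal.ofReal (h x)

/-- The truncated measure `ν_a = (1/ν(h ≤ a)) · h · 1_{h ≤ a} · μ` for `ν = h·μ`. -/
def truncMeas {Ω : Type*} [MeasurableSpace Ω] (μ : Measure Ω) (h : Ω → ℝ) (a : ℝ) : Measure Ω :=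
  ((densMeas μ h) {x | h x ≤ a})⁻¹ • (densMeas μ h).restrict {x | h x ≤ a}

/-!
Marton's argument. Let `B = {x | r ≤ d(x, A)}`. The function `d(·, A)` is `1`-Lipschitz,
vanishes on `A` and is at least `r` on `B`, so testing it against couplings through `μ` gives
`r ≤ W₁(μ, μ(·|A)) + W₁(μ, μ(·|B))`. The relative entropy of `μ(·|S)` with respect to `μ` is
`log (1 / μ S)`, so `T₁(C)` bounds the right side by
`√(2C log (1/μ A)) + √(2C log (1/μ B))`, and solving for `μ B` gives the claim.
-/

open ProbabilityTheory

section RelativeEntropy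

variable {Ω : Type*} [MeasurableSpace Ω]

lemma relEnt_cond (μ : Measure Ω) [SigmaFinite μ] {S : Set Ω} (hS : MeasurableSet S)
    (hS0 : μ S ≠ 0) (hStop : μ S ≠ ∞) :
    relEnt μ[|S] μ = ENNReal.ofReal (Real.log (1 / (μ S).toReal)) := by
  have := cond_isProbabilityMeasure_of_finite hS0 hStop
  have hdens : μ[|S] = μ.withDensity (S.indicator fun _ => (μ S)⁻¹) := by
    rw [withDensity_indicator hS, withDensity_const, ProbabilityTheory.cond]
  have hac : μ[|S] ≪ μ := hdens ▸ withDensity_absolutelyContinuous μ _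
  have hrnDeriv : (μ[|S]).rnDeriv μ =ᵐ[μ[|S]] S.indicator fun _ => (μ S)⁻¹ :=
    hac.ae_eq (hdens ▸ Measure.rnDeriv_withDensity μ (measurable_const.indicator hS))
  have hlog : (fun x => Real.log ((μ[|S]).rnDeriv μ x).toReal)
      =ᵐ[μ[|S]] fun _ => Real.log (1 / (μ S).toReal) := by
    filter_upwards [hrnDeriv, ae_cond_mem hS] with x hx hxS
    rw [hx, Set.indicator_of_mem hxS, ENNReal.toReal_inv, one_div]
  rw [relEnt, if_pos ⟨hac, (integrable_const _).congr hlog.symm⟩, integral_congr_ae hlog,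
    integral_const, probReal_univ, one_smul]

end RelativeEntropy

section Wasserstein

variable {E : Type*} [MeasurableSpace E] {μ ν : Measure E}

lemma IsCoupling.map_swap {π : Measure (E × E)} (hπ : IsCoupling π μ ν) :
    IsCoupling (π.map Prod.swap) ν μ := by
  refine ⟨?_, ?_⟩ <;> rw [Measure.map_map (by fun_prop) measurable_swap]
  exacts [hπ.2, hπ.1]

variable [MetricSpace E]

lemma wcost_comm (p : ℝ) : Wcost p μ ν = Wcost p ν μ := by
  suffices h : ∀ μ ν : Measure E, Wcost p ν μ ≤ Wcost p μ ν from (h ν μ).antisymm (h μ ν)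
  intro μ ν
  refine le_iInf fun π => le_iInf fun _ => le_iInf fun hπ => ?_
  have := Measure.isProbabilityMeasure_map (μ := π) measurable_swap.aemeasurable
  refine iInf_le_of_le (π.map Prod.swap) <| iInf_le_of_le this <| iInf_le_of_le hπ.map_swap ?_
  refine (lintegral_map_equiv _ MeasurableEquiv.prodComm).trans_le (le_of_eq ?_)
  congr 1 with z
  rw [dist_comm]
  rfl

lemma IsCoupling.lintegral_le_lintegral_add {π : Measure (E × E)} (hπ : IsCoupling π μ ν)
    {f : E → ℝ≥0∞} (hf : Measurable f) (hlip : ∀ x y, f x ≤ f y + ENNReal.ofReal (dist x y)) :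
    ∫⁻ x, f x ∂μ ≤ ∫⁻ y, f y ∂ν + ∫⁻ z, ENNReal.ofReal (dist z.1 z.2) ∂π :=
  calc ∫⁻ x, f x ∂μ = ∫⁻ z, f z.1 ∂π := by rw [← hπ.1, lintegral_map hf measurable_fst]
    _ ≤ ∫⁻ z, f z.2 + ENNReal.ofReal (dist z.1 z.2) ∂π := lintegral_mono fun z => hlip _ _
    _ = ∫⁻ y, f y ∂ν + ∫⁻ z, ENNReal.ofReal (dist z.1 z.2) ∂π := by
      rw [lintegral_add_left (f := fun z : E × E => f z.2) (hf.comp measurable_snd), ← hπ.2,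
        lintegral_map hf measurable_snd]

/-- The easy half of Kantorovich–Rubinstein duality. -/
lemma lintegral_le_lintegral_add_wcost_one {f : E → ℝ≥0∞} (hf : Measurable f)
    (hlip : ∀ x y, f x ≤ f y + ENNReal.ofReal (dist x y)) :
    ∫⁻ x, f x ∂μ ≤ ∫⁻ y, f y ∂ν + Wcost 1 μ ν := by
  simp only [Wcost, Real.rpow_one, ENNReal.add_iInf]
  exact le_iInf fun π => le_iInf fun _ => le_iInf fun hπ => hπ.lintegral_le_lintegral_add hf hlip

end Wasserstein

section Concentration

variable {E : Type*} [MetricSpace E] [MeasurableSpace E] {μ : Measure E}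

lemma ofReal_le_wcost_one_cond_add_wcost_one_cond [OpensMeasurableSpace E] [IsFiniteMeasure μ]
    {A B : Set E} (hA : MeasurableSet A) (hB : MeasurableSet B) (hB0 : μ B ≠ 0) {r : ℝ}
    (hAB : ∀ x ∈ B, r ≤ Metric.infDist x A) :
    ENNReal.ofReal r ≤ Wcost 1 μ μ[|A] + Wcost 1 μ μ[|B] := by
  have := cond_isProbabilityMeasure (μ := μ) hB0
  set f : E → ℝ≥0∞ := fun x => ENNReal.ofReal (Metric.infDist x A)
  have hf : Measurable f := (Metric.continuous_infDist_pt A).measurable.ennreal_ofReal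
  have hlip (x y : E) : f x ≤ f y + ENNReal.ofReal (dist x y) :=
    (ENNReal.ofReal_le_ofReal Metric.infDist_le_infDist_add_dist).trans ENNReal.ofReal_add_le
  have hfA : ∫⁻ x, f x ∂μ[|A] = 0 := by
    rw [lintegral_eq_zero_iff hf]
    filter_upwards [ae_cond_mem hA] with x hx
    simp [f, Metric.infDist_zero_of_mem hx]
  have hfB : ENNReal.ofReal r ≤ ∫⁻ x, f x ∂μ[|B] := by
    calc ENNReal.ofReal r = ∫⁻ _, ENNReal.ofReal r ∂μ[|B] := by simp
      _ ≤ ∫⁻ x, f x ∂μ[|B] := lintegral_mono_ae <| by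
        filter_upwards [ae_cond_mem hB] with x hx using ENNReal.ofReal_le_ofReal (hAB x hx)
  calc ENNReal.ofReal r ≤ ∫⁻ x, f x ∂μ[|B] := hfB
    _ ≤ ∫⁻ x, f x ∂μ + Wcost 1 μ[|B] μ := lintegral_le_lintegral_add_wcost_one hf hlip
    _ ≤ ∫⁻ x, f x ∂μ[|A] + Wcost 1 μ μ[|A] + Wcost 1 μ μ[|B] := by
      rw [wcost_comm]
      gcongr
      exact lintegral_le_lintegral_add_wcost_one hf hlip
    _ = Wcost 1 μ μ[|A] + Wcost 1 μ μ[|B] := by rw [hfA, zero_add]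

lemma TCI.wcost_one_cond_le [IsProbabilityMeasure μ] {C : ℝ} (hT : TCI 1 C μ) (hC : 0 ≤ C)
    {S : Set E} (hS : MeasurableSet S) (hS0 : μ S ≠ 0) :
    Wcost 1 μ μ[|S] ≤ ENNReal.ofReal (√(2 * C * Real.log (1 / (μ S).toReal))) := by
  have hlog : 0 ≤ Real.log (1 / (μ S).toReal) :=
    Real.log_nonneg <|
      one_le_one_div (ENNReal.toReal_pos hS0 (measure_ne_top μ S)) measureReal_le_one
  have := hT _ (cond_isProbabilityMeasure hS0)
  rwa [relEnt_cond μ hS hS0 (measure_ne_top μ S), div_one, ENNReal.rpow_one,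
    ← ENNReal.ofReal_mul (by positivity),
    ENNReal.ofReal_rpow_of_nonneg (by positivity) (by norm_num), ← Real.sqrt_eq_rpow] at this

end Concentration

lemma le_exp_of_le_add_sqrt_log {C a r t : ℝ} (hC : 0 < C) (ht0 : 0 < t) (ht1 : t ≤ 1)
    (har : a ≤ r) (h : r ≤ a + √(2 * C * Real.log (1 / t))) :
    t ≤ Real.exp (-(1 / (2 * C)) * (r - a) ^ 2) := by
  have hlog : 0 ≤ Real.log (1 / t) := Real.log_nonneg (one_le_one_div ht0 ht1)
  have hsq : (r - a) ^ 2 ≤ 2 * C * Real.log (1 / t) :=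
    calc (r - a) ^ 2 ≤ √(2 * C * Real.log (1 / t)) ^ 2 :=
          pow_le_pow_left₀ (sub_nonneg.2 har) (by linarith) 2
      _ = 2 * C * Real.log (1 / t) := Real.sq_sqrt (by positivity)
  rw [one_div, Real.log_inv] at hsq
  rw [← Real.log_le_iff_le_exp ht0, show -(1 / (2 * C)) * (r - a) ^ 2 = -((r - a) ^ 2 / (2 * C))
    by ring, le_neg, div_le_iff₀ (by positivity)]
  linarith

theorem concentration_of_t1_general
    {E : Type*} [MetricSpace E]
    [MeasurableSpace E] [BorelSpace E]
    (μ : Measure E) (hprob : IsProbabilityMeasure μ)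
    (C : ℝ) (hC : 0 < C) (hT1 : TCI 1 C μ)
    (A : Set E) (hA : MeasurableSet A) (hApos : 0 < μ A)
    (r : ℝ) (hr : Real.sqrt (2 * C * Real.log (1 / (μ A).toReal)) ≤ r) :
    μ {x | r ≤ Metric.infDist x A} ≤
      ENNReal.ofReal
        (Real.exp (-(1 / (2 * C)) *
          (r - Real.sqrt (2 * C * Real.log (1 / (μ A).toReal))) ^ 2)) := by
  set B := {x | r ≤ Metric.infDist x A}
  have hB : MeasurableSet B :=
    measurableSet_le measurable_const (Metric.continuous_infDist_pt A).measurable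
  rcases eq_or_ne (μ B) 0 with hB0 | hB0
  · simp [hB0]
  have hmarton := (ofReal_le_wcost_one_cond_add_wcost_one_cond hA hB hB0 fun _ hx => hx).trans
    (add_le_add (hT1.wcost_one_cond_le hC.le hA hApos.ne') (hT1.wcost_one_cond_le hC.le hB hB0))
  rw [← ENNReal.ofReal_add (by positivity) (by positivity),
    ENNReal.ofReal_le_ofReal_iff (by positivity)] at hmarton
  rw [← ENNReal.ofReal_toReal (measure_ne_top μ B)]
  exact ENNReal.ofReal_le_ofReal <| le_exp_of_le_add_sqrt_log hC
    (ENNReal.toReal_pos hB0 (measure_ne_top μ B)) measureReal_le_one hr hmarton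

/-- Gaussian concentration from `T₁(C)` (Marton's argument, inequality (1.3)): for every Borel
set `A` with `μ(A) > 0` and every `r ≥ √(2C log(1/μ(A)))`,
`μ(A_r^c) ≤ exp(-(1/2C)(r - √(2C log(1/μ(A))))²)`. -/
theorem concentration_of_t1
    {E : Type*} [MetricSpace E] [CompleteSpace E] [TopologicalSpace.SeparableSpace E]
    [MeasurableSpace E] [BorelSpace E]
    (μ : Measure E) (hprob : IsProbabilityMeasure μ)
    (C : ℝ) (hC : 0 < C) (hT1 : TCI 1 C μ)
    (A : Set E) (hA : MeasurableSet A) (hApos : 0 < μ A)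
    (r : ℝ) (hr : Real.sqrt (2 * C * Real.log (1 / (μ A).toReal)) ≤ r) :
    μ {x | r ≤ Metric.infDist x A} ≤
      ENNReal.ofReal
        (Real.exp (-(1 / (2 * C)) *
          (r - Real.sqrt (2 * C * Real.log (1 / (μ A).toReal))) ^ 2)) :=
  concentration_of_t1_general μ hprob C hC hT1 A hA hApos r hr

end
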